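/- arXiv:2405.08215 — 4 statements merged into one kernel-verified Lean document; each statement's English description precedes it below -/
import Mathlib

section
/- lim_{t→∞} √(2πt) · I₀(t) / e^t = 1. -/
open Real MeasureTheory Filter Topology

lemma sqrt_tendsto_atTop : Tendsto Real.sqrt atTop atTop := by
  rw [tendsto_atTop_atTop]
  intro b
  refine ⟨(max b 0) ^ 2, fun a ha => le_trans (le_max_left b 0) ?_⟩
  rw [show (max b 0)^2 = (max b 0)*(max b 0) by ring] at ha
  calc max b 0 = Real.sqrt ((max b 0)*(max b 0)) := by
        rw [Real.sqrt_mul_self (le_max_right b 0)]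
    _ ≤ Real.sqrt a := Real.sqrt_le_sqrt ha

lemma sin_div_tendsto : Tendsto (fun y : ℝ => Real.sin y / y) (𝓝[≠] (0:ℝ)) (𝓝 1) := by
  have h := (Real.hasDerivAt_sin 0)
  rw [hasDerivAt_iff_tendsto_slope] at h
  simpa [slope_fun_def, Real.cos_zero, div_eq_inv_mul] using h

lemma inner_limit (s : ℝ) (hs : 0 < s) :
    Tendsto (fun t : ℝ => t * (1 - Real.cos (s / Real.sqrt t))) atTop (𝓝 (1/2 * s^2)) := by
  have hc : Tendsto (fun t : ℝ => s / (2 * Real.sqrt t)) atTop (𝓝[≠] (0:ℝ)) := by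
    rw [tendsto_nhdsWithin_iff]
    constructor
    · exact tendsto_const_nhds.div_atTop (Tendsto.const_mul_atTop two_pos sqrt_tendsto_atTop)
    · filter_upwards [eventually_gt_atTop (0:ℝ)] with t ht
      have h2 : 0 < Real.sqrt t := Real.sqrt_pos.2 ht
      simp only [Set.mem_compl_iff, Set.mem_singleton_iff]
      positivity
  have h1 : Tendsto (fun t : ℝ => (1/2 * s^2) * (Real.sin (s / (2 * Real.sqrt t)) / (s / (2 * Real.sqrt t)))^2)
      atTop (𝓝 (1/2 * s^2)) := by
    have h2 := ((sin_div_tendsto.comp hc).pow 2).const_mul (1/2 * s^2)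
    simpa using h2
  refine h1.congr' ?_
  filter_upwards [eventually_gt_atTop (0:ℝ)] with t ht
  have hst : 0 < Real.sqrt t := Real.sqrt_pos.2 ht
  have hsq : Real.sqrt t ^ 2 = t := Real.sq_sqrt ht.le
  have hcos : 1 - Real.cos (s / Real.sqrt t) = 2 * Real.sin (s / (2 * Real.sqrt t)) ^ 2 := by
    have h3 := Real.sin_sq_eq_half_sub (s / (2 * Real.sqrt t))
    rw [h3]
    have h4 : 2 * (s / (2 * Real.sqrt t)) = s / Real.sqrt t := by field_simp
    rw [h4]; ring
  rw [div_pow, hcos]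
  field_simp
  rw [hsq]; ring

lemma key : Tendsto (fun t : ℝ => ∫ s in (0:ℝ)..(π * Real.sqrt t),
    Real.exp (-(t * (1 - Real.cos (s / Real.sqrt t))))) atTop (𝓝 (Real.sqrt (2*π) / 2)) := by
  have hval : (∫ s : ℝ, Set.indicator (Set.Ioi (0:ℝ))
      (fun s => Real.exp (-(1/2) * s^2)) s) = Real.sqrt (2*π) / 2 := by
    rw [MeasureTheory.integral_indicator measurableSet_Ioi, integral_gaussian_Ioi]
    norm_num
    ring
  have main : Tendsto (fun t : ℝ => ∫ s : ℝ, Set.indicator (Set.Ioc 0 (π * Real.sqrt t))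
      (fun s => Real.exp (-(t * (1 - Real.cos (s / Real.sqrt t))))) s) atTop
      (𝓝 (∫ s : ℝ, Set.indicator (Set.Ioi (0:ℝ)) (fun s => Real.exp (-(1/2) * s^2)) s)) := by
    apply tendsto_integral_filter_of_dominated_convergence
      (bound := fun s : ℝ => Real.exp (-(2/π^2) * s^2))
    · filter_upwards with t
      exact ((Real.continuous_exp.comp (by continuity)).aestronglyMeasurable).indicator
        measurableSet_Ioc
    · filter_upwards [eventually_gt_atTop (0:ℝ)] with t ht
      refine ae_of_all _ fun s => ?_
      by_cases hmem : s ∈ Set.Ioc 0 (π * Real.sqrt t)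
      · rw [Set.indicator_of_mem hmem, Real.norm_eq_abs, Real.abs_exp, Real.exp_le_exp]
        obtain ⟨hs0, hs1⟩ := hmem
        have hst : 0 < Real.sqrt t := Real.sqrt_pos.2 ht
        have hsq : Real.sqrt t ^ 2 = t := Real.sq_sqrt ht.le
        set x := s / Real.sqrt t with hx
        have hx0 : 0 < x := by positivity
        have hxpi : |x| ≤ π := by
          rw [abs_of_pos hx0, hx, div_le_iff₀ hst]
          linarith
        have hcos := Real.cos_le_one_sub_mul_cos_sq hxpi
        have htx : t * x^2 = s^2 := by
          rw [hx, div_pow, hsq]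
          field_simp
        have h5 : (2/π^2) * s^2 ≤ t * (1 - Real.cos x) := by
          have h6 : t * (2/π^2 * x^2) ≤ t * (1 - Real.cos x) :=
            mul_le_mul_of_nonneg_left (by linarith) ht.le
          calc (2/π^2) * s^2 = t * (2/π^2 * x^2) := by rw [← htx]; ring
            _ ≤ _ := h6
        linarith
      · rw [Set.indicator_of_notMem hmem]
        simpa using (Real.exp_pos _).le
    · exact integrable_exp_neg_mul_sq (by positivity)
    · refine ae_of_all _ fun s => ?_
      rcases le_or_gt s 0 with hs | hs
      · have h1 : ∀ t : ℝ, Set.indicator (Set.Ioc 0 (π * Real.sqrt t))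
            (fun s => Real.exp (-(t * (1 - Real.cos (s / Real.sqrt t))))) s = 0 := fun t =>
          Set.indicator_of_notMem (fun h => absurd h.1 (not_lt.2 hs)) _
        have h2 : Set.indicator (Set.Ioi (0:ℝ)) (fun s => Real.exp (-(1/2) * s^2)) s = 0 :=
          Set.indicator_of_notMem (by simpa using hs) _
        simp only [h1, h2]
        exact tendsto_const_nhds
      · have h2 : Set.indicator (Set.Ioi (0:ℝ)) (fun s => Real.exp (-(1/2) * s^2)) s
            = Real.exp (-(1/2) * s^2) := Set.indicator_of_mem hs _
        rw [h2]
        have hlim : Tendsto (fun t : ℝ => Real.exp (-(t * (1 - Real.cos (s / Real.sqrt t)))))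
            atTop (𝓝 (Real.exp (-(1/2) * s^2))) := by
          have := (Real.continuous_exp.tendsto _).comp (inner_limit s hs).neg
          simpa [Function.comp_def, mul_comm, neg_mul] using this
        refine hlim.congr' ?_
        filter_upwards [eventually_ge_atTop ((s/π)^2)] with t htge
        have hmem : s ∈ Set.Ioc 0 (π * Real.sqrt t) := by
          refine ⟨hs, ?_⟩
          have h3 : s / π ≤ Real.sqrt t := by
            calc s / π = Real.sqrt ((s/π)^2) := by
                  rw [Real.sqrt_sq (by positivity)]
              _ ≤ Real.sqrt t := Real.sqrt_le_sqrt htge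
          calc s = π * (s / π) := by field_simp
            _ ≤ π * Real.sqrt t := by
              exact mul_le_mul_of_nonneg_left h3 Real.pi_pos.le
        exact (Set.indicator_of_mem hmem
          (fun s => Real.exp (-(t * (1 - Real.cos (s / Real.sqrt t)))))).symm
  rw [hval] at main
  refine main.congr' ?_
  filter_upwards [eventually_ge_atTop (0:ℝ)] with t ht
  rw [MeasureTheory.integral_indicator measurableSet_Ioc,
    intervalIntegral.integral_of_le (by positivity)]

/-- Modified Bessel function of the first kind of order 0. -/
noncomputable def I0 (t : ℝ) : ℝ :=
  (1 / (2 * π)) * ∫ θ in (-π)..π, Real.exp (t * Real.cos θ)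

theorem I0_asymptotic :
    Tendsto (fun t : ℝ => Real.sqrt (2 * π * t) * I0 t / Real.exp t) atTop (𝓝 1) := by
  have hπ : (0:ℝ) < π := Real.pi_pos
  have h := key.const_mul (Real.sqrt (2*π)/π)
  have hval : (Real.sqrt (2*π)/π) * (Real.sqrt (2*π)/2) = 1 := by
    have h2 : Real.sqrt (2*π) * Real.sqrt (2*π) = 2*π := Real.mul_self_sqrt (by positivity)
    rw [div_mul_div_comm, h2, mul_comm π 2, div_self (by positivity)]
  rw [hval] at h
  refine h.congr' ?_
  filter_upwards [eventually_gt_atTop (0:ℝ)] with t ht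
  have hst : 0 < Real.sqrt t := Real.sqrt_pos.2 ht
  have het : (0:ℝ) < Real.exp t := Real.exp_pos t
  -- symmetry
  have hint : ∀ a b : ℝ, IntervalIntegrable (fun θ => Real.exp (t * Real.cos θ)) volume a b :=
    fun a b => (Real.continuous_exp.comp (continuous_const.mul Real.continuous_cos)).intervalIntegrable a b
  have hsym : (∫ θ in (-π)..π, Real.exp (t * Real.cos θ))
      = 2 * ∫ θ in (0:ℝ)..π, Real.exp (t * Real.cos θ) := by
    have hsplit := intervalIntegral.integral_add_adjacent_intervals (hint (-π) 0) (hint 0 π)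
    have hneg : (∫ θ in (0:ℝ)..π, Real.exp (t * Real.cos (-θ)))
        = ∫ θ in (-π)..(0:ℝ), Real.exp (t * Real.cos θ) := by
      rw [intervalIntegral.integral_comp_neg (fun θ => Real.exp (t * Real.cos θ))]
      norm_num
    simp only [Real.cos_neg] at hneg
    rw [← hsplit, ← hneg]
    ring
  -- substitution
  have hsub : (∫ s in (0:ℝ)..(π * Real.sqrt t), Real.exp (-(t * (1 - Real.cos (s / Real.sqrt t)))))
      = Real.sqrt t * ∫ θ in (0:ℝ)..π, Real.exp (-(t * (1 - Real.cos θ))) := by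
    rw [intervalIntegral.integral_comp_div (fun θ => Real.exp (-(t * (1 - Real.cos θ)))) hst.ne']
    rw [zero_div, mul_div_assoc, div_self hst.ne', mul_one, smul_eq_mul]
  -- exp factor
  have hexp : Real.exp (-t) * ∫ θ in (0:ℝ)..π, Real.exp (t * Real.cos θ)
      = ∫ θ in (0:ℝ)..π, Real.exp (-(t * (1 - Real.cos θ))) := by
    rw [← intervalIntegral.integral_const_mul]
    apply intervalIntegral.integral_congr
    intro θ _
    dsimp only
    rw [← Real.exp_add]
    ring_nf
  have hsqrt : Real.sqrt (2 * π * t) = Real.sqrt (2*π) * Real.sqrt t :=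
    Real.sqrt_mul (by positivity) t
  rw [I0, hsym, hsqrt, hsub, ← hexp, Real.exp_neg]
  field_simp
end

section
/- For fixed r > 0, there exists a Schwartz function F on ℝ² such that |f_n(x)| ≤ F(x) for all x ∈ ℝ² and all n ∈ ℕ, where f_n(x) = 2nr√π · I₀(2n²r‖x‖) · e^{-n²(‖x‖² + r²)}. -/
open Real MeasureTheory Filter Topology

lemma intI0 (t : ℝ) : IntervalIntegrable (fun θ => Real.exp (t * Real.cos θ)) volume (-π) π :=
  (Real.continuous_exp.comp (continuous_const.mul Real.continuous_cos)).intervalIntegrable _ _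

lemma I0_nonneg (t : ℝ) : 0 ≤ I0 t := by
  have hπ := Real.pi_pos
  apply mul_nonneg (by positivity)
  apply intervalIntegral.integral_nonneg (by linarith)
  exact fun u _ => (Real.exp_pos _).le

lemma I0_le_exp {t : ℝ} (ht : 0 ≤ t) : I0 t ≤ Real.exp t := by
  have hπ := Real.pi_pos
  have h1 : (∫ θ in (-π)..π, Real.exp (t * Real.cos θ)) ≤ ∫ _ in (-π)..π, Real.exp t := by
    apply intervalIntegral.integral_mono_on (by linarith) (intI0 t)
      (intervalIntegrable_const)
    intro θ _
    apply Real.exp_le_exp.2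
    nlinarith [Real.cos_le_one θ]
  have h2 : (∫ _ in (-π)..π, Real.exp t) = (2 * π) * Real.exp t := by
    rw [intervalIntegral.integral_const]
    simp
    ring
  rw [I0]
  rw [h2] at h1
  calc (1 / (2 * π)) * ∫ θ in (-π)..π, Real.exp (t * Real.cos θ)
      ≤ (1 / (2 * π)) * ((2 * π) * Real.exp t) := by gcongr
  _ = Real.exp t := by field_simp

lemma cos_quad : ∀ θ : ℝ, |θ| ≤ π → 2 / π ^ 2 * θ ^ 2 ≤ 1 - Real.cos θ := by
  have hπ := Real.pi_pos
  have key : ∀ θ : ℝ, 0 ≤ θ → θ ≤ π → 2 / π ^ 2 * θ ^ 2 ≤ 1 - Real.cos θ := by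
    intro θ h0 h1
    have hs : 2 / π * (θ / 2) ≤ Real.sin (θ / 2) := Real.mul_le_sin (by positivity) (by linarith)
    have h2 : 1 - Real.cos θ = 2 * Real.sin (θ / 2) ^ 2 := by
      have hc := Real.cos_two_mul' (θ / 2)
      have hθ : 2 * (θ / 2) = θ := by ring
      rw [hθ] at hc
      nlinarith [Real.sin_sq_add_cos_sq (θ / 2)]
    have h3 : (2 / π * (θ / 2)) ^ 2 ≤ Real.sin (θ / 2) ^ 2 :=
      pow_le_pow_left₀ (by positivity) hs 2
    have h4 : (2 / π * (θ / 2)) ^ 2 = 2 / π ^ 2 * θ ^ 2 / 2 := by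
      field_simp
    rw [h4] at h3
    linarith
  intro θ h
  rcases le_or_gt 0 θ with h0 | h0
  · exact key θ h0 (by rwa [abs_of_nonneg h0] at h)
  · have := key (-θ) (by linarith) (by rwa [abs_of_neg h0] at h)
    rw [Real.cos_neg] at this
    nlinarith

lemma I0_le_gauss {t : ℝ} (ht : 0 < t) :
    I0 t ≤ Real.exp t * Real.sqrt (π / (2 * t)) / 2 := by
  have hπ := Real.pi_pos
  set b : ℝ := t * (2 / π ^ 2) with hb
  have hbpos : 0 < b := by positivity
  have h1 : (∫ θ in (-π)..π, Real.exp (t * Real.cos θ))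
      ≤ ∫ θ in (-π)..π, Real.exp t * Real.exp (-b * θ ^ 2) := by
    apply intervalIntegral.integral_mono_on (by linarith) (intI0 t)
    · apply Continuous.intervalIntegrable
      continuity
    intro θ hθ
    rw [← Real.exp_add]
    apply Real.exp_le_exp.2
    have hq := cos_quad θ (abs_le.2 ⟨hθ.1, hθ.2⟩)
    have : t * (2 / π ^ 2 * θ ^ 2) ≤ t * (1 - Real.cos θ) := by
      apply mul_le_mul_of_nonneg_left hq ht.le
    nlinarith
  have h2 : (∫ θ in (-π)..π, Real.exp t * Real.exp (-b * θ ^ 2))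
      = Real.exp t * ∫ θ in (-π)..π, Real.exp (-b * θ ^ 2) :=
    intervalIntegral.integral_const_mul _ _
  have h3 : (∫ θ in (-π)..π, Real.exp (-b * θ ^ 2)) ≤ Real.sqrt (π / b) := by
    have hint : Integrable (fun θ : ℝ => Real.exp (-b * θ ^ 2)) := integrable_exp_neg_mul_sq hbpos
    have h4 : (∫ θ in (-π)..π, Real.exp (-b * θ ^ 2))
        = ∫ θ in Set.Ioc (-π) π, Real.exp (-b * θ ^ 2) := by
      rw [intervalIntegral.integral_of_le (by linarith)]
    rw [h4, ← integral_gaussian b]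
    apply setIntegral_le_integral hint
    filter_upwards with θ using (Real.exp_pos _).le
  have h5 : Real.sqrt (π / b) = π * Real.sqrt (π / (2 * t)) := by
    have : π / b = π ^ 2 * (π / (2 * t)) := by
      rw [hb]; field_simp
    rw [this, Real.sqrt_mul (by positivity), Real.sqrt_sq hπ.le]
  rw [I0]
  calc (1 / (2 * π)) * ∫ θ in (-π)..π, Real.exp (t * Real.cos θ)
      ≤ (1 / (2 * π)) * (Real.exp t * (π * Real.sqrt (π / (2 * t)))) := by
        apply mul_le_mul_of_nonneg_left ?_ (by positivity)
        rw [← h5]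
        calc (∫ θ in (-π)..π, Real.exp (t * Real.cos θ))
            ≤ Real.exp t * ∫ θ in (-π)..π, Real.exp (-b * θ ^ 2) := by rw [← h2]; exact h1
        _ ≤ Real.exp t * Real.sqrt (π / b) := by
            gcongr
  _ = Real.exp t * Real.sqrt (π / (2 * t)) / 2 := by field_simp


variable {E : Type*} [NormedAddCommGroup E] [InnerProductSpace ℝ E]

local notation "⟪" x ", " y "⟫" => @inner ℝ _ _ x y

noncomputable def nB : E →L[ℝ] E →L[ℝ] ℝ :=
  -((isBoundedBilinearMap_inner (𝕜 := ℝ) (E := E)).toContinuousLinearMap)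

@[simp] lemma nB_apply (x y : E) : nB x y = -⟪x, y⟫ := rfl

lemma nB_norm_le : ‖(nB (E := E))‖ ≤ 1 := by
  refine ContinuousLinearMap.opNorm_le_bound _ zero_le_one fun x => ?_
  refine ContinuousLinearMap.opNorm_le_bound _ (by positivity) fun y => ?_
  have := abs_real_inner_le_norm x y
  have h2 : ‖nB x y‖ = |⟪x, y⟫| := by simp
  rw [h2]; nlinarith [norm_nonneg x, norm_nonneg y]

noncomputable def qf (x : E) : ℝ := -(⟪x, x⟫ / 2)

lemma qf_contDiff {N : WithTop ℕ∞} : ContDiff ℝ N (qf (E := E)) :=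
  (((contDiff_fun_id.inner ℝ contDiff_fun_id).div_const 2).neg)

lemma fderiv_qf : fderiv ℝ (qf (E := E)) = fun x => nB x := by
  funext x
  ext v
  have hd : DifferentiableAt ℝ (fun y : E => ⟪y, y⟫) x :=
    differentiableAt_fun_id.inner ℝ differentiableAt_fun_id
  have hqe : qf (E := E) = fun y : E => (-(⟪y, y⟫)) * (2:ℝ)⁻¹ :=
    funext fun y => by unfold qf; ring
  have h1 : fderiv ℝ (qf (E := E)) x v = -((fderiv ℝ (fun y : E => ⟪y, y⟫) x) v * (2:ℝ)⁻¹) := by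
    rw [hqe, fderiv_mul_const hd.fun_neg, fderiv_fun_neg]
    simp
    ring
  rw [h1, fderiv_inner_apply ℝ differentiableAt_fun_id differentiableAt_fun_id]
  simp [real_inner_comm x v]
  ring

lemma norm_iteratedFDeriv_qf (x : E) : ∀ i : ℕ, 1 ≤ i →
    ‖iteratedFDeriv ℝ i (qf (E := E)) x‖ ≤ (1 + ‖x‖) ^ i := by
  have h0 : (0:ℝ) ≤ ‖x‖ := norm_nonneg x
  have hfun : (fun y : E => nB (E := E) y) = ⇑(nB (E := E)) := rfl
  rintro (_ | i) hi
  · omega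
  rw [← norm_iteratedFDeriv_fderiv, fderiv_qf, hfun]
  match i with
  | 0 =>
    rw [norm_iteratedFDeriv_zero]
    calc ‖nB (E := E) x‖ ≤ ‖nB (E := E)‖ * ‖x‖ := ContinuousLinearMap.le_opNorm _ x
    _ ≤ 1 * ‖x‖ := by gcongr; exact nB_norm_le
    _ ≤ (1 + ‖x‖) ^ 1 := by simp
  | 1 =>
    rw [← norm_iteratedFDeriv_fderiv, norm_iteratedFDeriv_zero,
      ContinuousLinearMap.fderiv]
    calc ‖nB (E := E)‖ ≤ 1 := nB_norm_le
    _ ≤ (1 + ‖x‖) ^ 2 := by nlinarith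
  | (j + 2) =>
    have h2 : fderiv ℝ (⇑(nB (E := E))) = fun _ : E => nB (E := E) :=
      funext fun y => ContinuousLinearMap.fderiv _
    rw [← norm_iteratedFDeriv_fderiv, h2, iteratedFDeriv_succ_const]
    simp
    positivity

lemma iteratedDeriv_rexp (i : ℕ) : iteratedDeriv i Real.exp = Real.exp := by
  induction i with
  | zero => simp [iteratedDeriv_zero]
  | succ n ih => rw [iteratedDeriv_succ, ih, Real.deriv_exp]

lemma norm_iteratedFDeriv_rexp (i : ℕ) (t : ℝ) :
    ‖iteratedFDeriv ℝ i Real.exp t‖ = Real.exp t := by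
  rw [norm_iteratedFDeriv_eq_norm_iteratedDeriv, iteratedDeriv_rexp]
  simp [abs_of_pos (Real.exp_pos t)]

lemma poly_gauss (m : ℕ) (t : ℝ) (ht : 0 ≤ t) :
    (1 + t) ^ m * Real.exp (-(t ^ 2 / 2)) ≤ Real.exp ((m : ℝ) ^ 2 / 2) := by
  have h1 : (1 + t) ^ m ≤ Real.exp ((m : ℝ) * t) := by
    calc (1 + t) ^ m ≤ (Real.exp t) ^ m :=
          pow_le_pow_left₀ (by linarith) (by linarith [Real.add_one_le_exp t]) m
    _ = Real.exp ((m : ℝ) * t) := by rw [← Real.exp_nat_mul]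
  calc (1 + t) ^ m * Real.exp (-(t ^ 2 / 2))
      ≤ Real.exp ((m : ℝ) * t) * Real.exp (-(t ^ 2 / 2)) := by
        gcongr
  _ = Real.exp ((m : ℝ) * t + -(t ^ 2 / 2)) := (Real.exp_add _ _).symm
  _ ≤ Real.exp ((m : ℝ) ^ 2 / 2) := by
        apply Real.exp_le_exp.2; nlinarith [sq_nonneg ((m : ℝ) - t)]

lemma qf_eq_norm (x : E) : qf x = -(‖x‖ ^ 2 / 2) := by
  rw [qf, real_inner_self_eq_norm_sq]

noncomputable def gaussSchwartz : SchwartzMap E ℝ where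
  toFun := fun x => Real.exp (qf x)
  smooth' := Real.contDiff_exp.comp qf_contDiff
  decay' := by
    intro k n
    refine ⟨((n : ℕ).factorial : ℝ) * Real.exp (((k + n : ℕ) : ℝ) ^ 2 / 2), fun x => ?_⟩
    have h0 : (0:ℝ) ≤ ‖x‖ := norm_nonneg x
    have hC : ∀ i, i ≤ n → ‖iteratedFDeriv ℝ i Real.exp (qf x)‖ ≤ Real.exp (qf x) :=
      fun i _ => le_of_eq (norm_iteratedFDeriv_rexp i _)
    have hD : ∀ i, 1 ≤ i → i ≤ n → ‖iteratedFDeriv ℝ i (qf (E := E)) x‖ ≤ (1 + ‖x‖) ^ i :=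
      fun i hi _ => norm_iteratedFDeriv_qf x i hi
    have hcomp := norm_iteratedFDeriv_comp_le (𝕜 := ℝ) (N := ⊤) (g := Real.exp) (f := qf (E := E))
      Real.contDiff_exp qf_contDiff le_top x hC hD
    have heq : Real.exp ∘ qf (E := E) = fun x => Real.exp (qf x) := rfl
    rw [heq] at hcomp
    have hexp : (0:ℝ) < Real.exp (qf x) := Real.exp_pos _
    calc ‖x‖ ^ k * ‖iteratedFDeriv ℝ n (fun x : E => Real.exp (qf x)) x‖
        ≤ (1 + ‖x‖) ^ k * (((n : ℕ).factorial : ℝ) * Real.exp (qf x) * (1 + ‖x‖) ^ n) := by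
          apply mul_le_mul (pow_le_pow_left₀ h0 (by linarith) k) hcomp (by positivity)
            (by positivity)
    _ = ((n : ℕ).factorial : ℝ) * ((1 + ‖x‖) ^ (k + n) * Real.exp (-(‖x‖ ^ 2 / 2))) := by
          rw [pow_add, qf_eq_norm]; ring
    _ ≤ ((n : ℕ).factorial : ℝ) * Real.exp (((k + n : ℕ) : ℝ) ^ 2 / 2) := by
          have := poly_gauss (k + n) ‖x‖ h0
          have hn : (0:ℝ) ≤ ((n : ℕ).factorial : ℝ) := by positivity
          push_cast at this ⊢
          nlinarith

@[simp] lemma gaussSchwartz_apply (x : E) :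
    gaussSchwartz x = Real.exp (-(‖x‖ ^ 2 / 2)) := by
  rw [← qf_eq_norm]; rfl



noncomputable def Cr (r : ℝ) : ℝ :=
  Real.exp (r ^ 2) * (2 * r * Real.sqrt π * Real.exp (r ^ 2 / 4) * (4 / r ^ 2) + π)

lemma Cr_pos {r : ℝ} (hr : 0 < r) : 0 < Cr r := by
  have hπ := Real.pi_pos
  have h := Real.sqrt_nonneg π
  unfold Cr
  positivity

set_option maxHeartbeats 1000000 in
lemma key_bound (r : ℝ) (hr : 0 < r) (N ρ : ℝ) (hN : 1 ≤ N) (hρ : 0 ≤ ρ) :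
    2 * N * r * Real.sqrt π * I0 (2 * N ^ 2 * r * ρ) * Real.exp (-N ^ 2 * (ρ ^ 2 + r ^ 2))
      ≤ Cr r * Real.exp (-(ρ ^ 2 / 2)) := by
  have hπ := Real.pi_pos
  have hsπ : 0 ≤ Real.sqrt π := Real.sqrt_nonneg π
  have hN0 : 0 < N := lt_of_lt_of_le one_pos hN
  have hsub : -(ρ - r) ^ 2 ≤ r ^ 2 - ρ ^ 2 / 2 := by nlinarith [sq_nonneg (ρ - 2 * r)]
  have hexpo : 2 * N ^ 2 * r * ρ + -N ^ 2 * (ρ ^ 2 + r ^ 2) = -N ^ 2 * (ρ - r) ^ 2 := by ring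
  by_cases hcase : 2 * r * ρ ≤ r ^ 2
  · -- case A : small ρ
    have ht0 : 0 ≤ 2 * N ^ 2 * r * ρ := by positivity
    have hq : r ^ 2 / 4 ≤ (ρ - r) ^ 2 := by nlinarith
    have e1 : -N ^ 2 * (ρ - r) ^ 2 ≤ -(N * (r ^ 2 / 4)) + r ^ 2 / 4 + (r ^ 2 - ρ ^ 2 / 2) := by
      have f1 : (N - 1) * (r ^ 2 / 4) ≤ (N - 1) * (ρ - r) ^ 2 :=
        mul_le_mul_of_nonneg_left hq (by linarith)
      have f2 : 0 ≤ (N ^ 2 - N) * (ρ - r) ^ 2 :=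
        mul_nonneg (by nlinarith) (sq_nonneg _)
      nlinarith
    have hu : N * (r ^ 2 / 4) ≤ Real.exp (N * (r ^ 2 / 4)) := by
      have := Real.add_one_le_exp (N * (r ^ 2 / 4))
      linarith
    have hNe : N * Real.exp (-(N * (r ^ 2 / 4))) ≤ 4 / r ^ 2 := by
      have hep : 0 < Real.exp (N * (r ^ 2 / 4)) := Real.exp_pos _
      rw [Real.exp_neg, ← div_eq_mul_inv, div_le_div_iff₀ hep (by positivity)]
      nlinarith
    calc 2 * N * r * Real.sqrt π * I0 (2 * N ^ 2 * r * ρ) * Real.exp (-N ^ 2 * (ρ ^ 2 + r ^ 2))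
        ≤ 2 * N * r * Real.sqrt π * Real.exp (2 * N ^ 2 * r * ρ)
            * Real.exp (-N ^ 2 * (ρ ^ 2 + r ^ 2)) := by
          have := I0_le_exp ht0
          gcongr
    _ = 2 * r * Real.sqrt π * (N * Real.exp (-N ^ 2 * (ρ - r) ^ 2)) := by
          rw [← hexpo, Real.exp_add]; ring
    _ ≤ 2 * r * Real.sqrt π *
          (N * (Real.exp (-(N * (r ^ 2 / 4))) * Real.exp (r ^ 2 / 4)
            * Real.exp (r ^ 2 - ρ ^ 2 / 2))) := by
          have : Real.exp (-N ^ 2 * (ρ - r) ^ 2)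
              ≤ Real.exp (-(N * (r ^ 2 / 4))) * Real.exp (r ^ 2 / 4)
                * Real.exp (r ^ 2 - ρ ^ 2 / 2) := by
            rw [← Real.exp_add, ← Real.exp_add]
            exact Real.exp_le_exp.2 e1
          gcongr
    _ = (2 * r * Real.sqrt π * Real.exp (r ^ 2 / 4) * (N * Real.exp (-(N * (r ^ 2 / 4)))))
          * (Real.exp (r ^ 2) * Real.exp (-(ρ ^ 2 / 2))) := by
          rw [show r ^ 2 - ρ ^ 2 / 2 = r ^ 2 + -(ρ ^ 2 / 2) by ring, Real.exp_add]; ring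
    _ ≤ (2 * r * Real.sqrt π * Real.exp (r ^ 2 / 4) * (4 / r ^ 2))
          * (Real.exp (r ^ 2) * Real.exp (-(ρ ^ 2 / 2))) := by
          gcongr
    _ ≤ Cr r * Real.exp (-(ρ ^ 2 / 2)) := by
          have hCr : Cr r * Real.exp (-(ρ ^ 2 / 2))
              = (2 * r * Real.sqrt π * Real.exp (r ^ 2 / 4) * (4 / r ^ 2) + π)
                * (Real.exp (r ^ 2) * Real.exp (-(ρ ^ 2 / 2))) := by
            unfold Cr; ring
          rw [hCr]
          apply mul_le_mul_of_nonneg_right (by linarith) (by positivity)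
  · -- case B : large ρ
    push_neg at hcase
    have hρ0 : 0 < ρ := by nlinarith
    have ht0 : 0 < 2 * N ^ 2 * r * ρ := by positivity
    set t := 2 * N ^ 2 * r * ρ with htdef
    have hsq : Real.sqrt (π / (2 * t)) ≤ Real.sqrt (π / 2) / (N * r) := by
      have h1 : π / (2 * t) ≤ π / 2 * (1 / (N * r)) ^ 2 := by
        have hden : 2 * (N * r) ^ 2 ≤ 2 * t := by
          rw [htdef]
          nlinarith [mul_le_mul_of_nonneg_left hcase.le (sq_nonneg N)]
        rw [show π / 2 * (1 / (N * r)) ^ 2 = π / (2 * (N * r) ^ 2) by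
          rw [div_pow, one_pow]; ring]
        gcongr
      calc Real.sqrt (π / (2 * t)) ≤ Real.sqrt (π / 2 * (1 / (N * r)) ^ 2) :=
            Real.sqrt_le_sqrt h1
      _ = Real.sqrt (π / 2) * (1 / (N * r)) := by
            rw [Real.sqrt_mul (by positivity), Real.sqrt_sq (by positivity)]
      _ = Real.sqrt (π / 2) / (N * r) := by ring
    have hππ : Real.sqrt π * Real.sqrt (π / 2) ≤ π := by
      rw [← Real.sqrt_mul hπ.le]
      calc Real.sqrt (π * (π / 2)) ≤ Real.sqrt (π ^ 2) := by
            apply Real.sqrt_le_sqrt; nlinarith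
      _ = π := Real.sqrt_sq hπ.le
    calc 2 * N * r * Real.sqrt π * I0 t * Real.exp (-N ^ 2 * (ρ ^ 2 + r ^ 2))
        ≤ 2 * N * r * Real.sqrt π * (Real.exp t * (Real.sqrt (π / 2) / (N * r)) / 2)
            * Real.exp (-N ^ 2 * (ρ ^ 2 + r ^ 2)) := by
          have h1 := I0_le_gauss ht0
          have h2 : Real.exp t * Real.sqrt (π / (2 * t)) / 2
              ≤ Real.exp t * (Real.sqrt (π / 2) / (N * r)) / 2 := by gcongr
          gcongr
          exact h1.trans h2
    _ = Real.sqrt π * Real.sqrt (π / 2) * Real.exp (-N ^ 2 * (ρ - r) ^ 2) := by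
          rw [← hexpo, Real.exp_add]
          field_simp
    _ ≤ π * Real.exp (r ^ 2 - ρ ^ 2 / 2) := by
          apply mul_le_mul hππ _ (Real.exp_pos _).le hπ.le
          apply Real.exp_le_exp.2
          have hN2 : (0:ℝ) ≤ N ^ 2 - 1 := by nlinarith
          nlinarith [hsub, mul_nonneg hN2 (sq_nonneg (ρ - r))]
    _ = Real.exp (r ^ 2) * π * Real.exp (-(ρ ^ 2 / 2)) := by
          rw [show r ^ 2 - ρ ^ 2 / 2 = r ^ 2 + -(ρ ^ 2 / 2) by ring, Real.exp_add]; ring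
    _ ≤ Cr r * Real.exp (-(ρ ^ 2 / 2)) := by
          have hCr : Cr r * Real.exp (-(ρ ^ 2 / 2))
              = (2 * r * Real.sqrt π * Real.exp (r ^ 2 / 4) * (4 / r ^ 2) + π)
                * (Real.exp (r ^ 2) * Real.exp (-(ρ ^ 2 / 2))) := by
            unfold Cr; ring
          have h3 : (0:ℝ) ≤ 2 * r * Real.sqrt π * Real.exp (r ^ 2 / 4) * (4 / r ^ 2) := by
            positivity
          rw [hCr, show Real.exp (r ^ 2) * π * Real.exp (-(ρ ^ 2 / 2))
            = π * (Real.exp (r ^ 2) * Real.exp (-(ρ ^ 2 / 2))) by ring]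
          apply mul_le_mul_of_nonneg_right (by linarith) (by positivity)


/-- The sequence `fₙ` is dominated by a single Schwartz function. -/
theorem fn_dominated_by_schwartz (r : ℝ) (hr : 0 < r) :
    ∃ F : SchwartzMap (EuclideanSpace ℝ (Fin 2)) ℝ,
      ∀ (n : ℕ) (x : EuclideanSpace ℝ (Fin 2)),
        |2 * (n:ℝ) * r * Real.sqrt π * I0 (2 * (n:ℝ)^2 * r * ‖x‖) *
            Real.exp (-(n:ℝ)^2 * (‖x‖^2 + r^2))| ≤ F x := by
  refine ⟨Cr r • gaussSchwartz, fun n x => ?_⟩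
  have hval : (Cr r • gaussSchwartz (E := EuclideanSpace ℝ (Fin 2))) x
      = Cr r * Real.exp (-(‖x‖ ^ 2 / 2)) := by
    rw [SchwartzMap.smul_apply, gaussSchwartz_apply]
    simp
  rw [hval]
  rcases Nat.eq_zero_or_pos n with hn | hn
  · subst hn
    simp only [Nat.cast_zero]
    rw [show |2 * (0:ℝ) * r * Real.sqrt π * I0 (2 * (0:ℝ)^2 * r * ‖x‖) *
        Real.exp (-(0:ℝ)^2 * (‖x‖^2 + r^2))| = 0 by rw [abs_eq_zero]; ring]
    exact mul_nonneg (Cr_pos hr).le (Real.exp_pos _).le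
  · have hN : (1:ℝ) ≤ (n:ℝ) := by exact_mod_cast hn
    have key := key_bound r hr (n:ℝ) ‖x‖ hN (norm_nonneg x)
    have hnn : 0 ≤ 2 * (n:ℝ) * r * Real.sqrt π * I0 (2 * (n:ℝ)^2 * r * ‖x‖) *
        Real.exp (-(n:ℝ)^2 * (‖x‖^2 + r^2)) := by
      apply mul_nonneg (mul_nonneg (by positivity) (I0_nonneg _)) (Real.exp_pos _).le
    rw [abs_of_nonneg hnn]
    exact key
end

section
/- For every x ∈ ℝ² with x ≠ 0, lim_{n→∞} 2nr√π · I₀(2n²r‖x‖) · e^{-n²(‖x‖²+r²)} = √(r/‖x‖) · lim_{n→∞} e^{-n²(‖x‖−r)²}, and in particular equals 1 if ‖x‖ = r and 0 if ‖x‖ ≠ r. -/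
open Real MeasureTheory Filter Topology

lemma one_sub_cos_ge' (θ : ℝ) (hθ : |θ| ≤ π) : 2/π^2 * θ^2 ≤ 1 - Real.cos θ := by
  have hπ := Real.pi_pos
  have hs : Real.sin (θ/2)^2 = 1/2 - Real.cos θ / 2 := by
    have := Real.sin_sq_eq_half_sub (θ/2)
    rw [show 2 * (θ/2) = θ by ring] at this
    simpa using this
  have h1 : 2/π * (|θ|/2) ≤ Real.sin (|θ|/2) :=
    Real.mul_le_sin (by positivity) (by linarith)
  have h2 : Real.sin (|θ|/2)^2 = Real.sin (θ/2)^2 := by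
    rcases abs_cases θ with ⟨h, _⟩ | ⟨h, _⟩
    · rw [h]
    · rw [h, neg_div, Real.sin_neg, neg_sq]
  have h3 : (0:ℝ) ≤ 2/π * (|θ|/2) := by positivity
  have h4 : (2/π * (|θ|/2))^2 ≤ Real.sin (|θ|/2)^2 := by nlinarith
  have h5 : (2/π * (|θ|/2))^2 = θ^2/π^2 := by
    rw [mul_pow, div_pow, div_pow, sq_abs]; field_simp
  have h6 : θ^2/π^2 ≤ Real.sin (θ/2)^2 := by rw [← h2, ← h5]; exact h4
  rw [hs] at h6
  have hπ2 : (0:ℝ) < π^2 := by positivity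
  rw [div_le_iff₀ hπ2] at h6
  rw [div_mul_eq_mul_div, div_le_iff₀ hπ2]
  nlinarith

lemma sin_div_lim' : Tendsto (fun t : ℝ => Real.sin t / t) (𝓝[≠] (0:ℝ)) (𝓝 1) := by
  have hder : HasDerivAt Real.sin 1 0 := by simpa using Real.hasDerivAt_sin 0
  have := hasDerivAt_iff_tendsto_slope.mp hder
  refine this.congr fun t => ?_
  simp [slope_fun_def, Real.sin_zero, div_eq_inv_mul]

lemma key_tendsto' {c : ℕ → ℝ} (hc : Tendsto c atTop atTop) :
    Tendsto (fun n => c n * ∫ θ in (-π)..π, Real.exp (-(c n)^2 * (1 - Real.cos θ)))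
      atTop (𝓝 (Real.sqrt (2*π))) := by
  have hπ := Real.pi_pos
  set F : ℕ → ℝ → ℝ := fun n u =>
    Set.indicator (Set.Ioc (-(π * c n)) (π * c n))
      (fun u => Real.exp (-(c n)^2 * (1 - Real.cos (u / c n)))) u with hF
  set f : ℝ → ℝ := fun u => Real.exp (-(1/2 : ℝ) * u^2) with hf
  have hmain : Tendsto (fun n => ∫ u, F n u) atTop (𝓝 (∫ u, f u)) := by
    apply tendsto_integral_of_dominated_convergence (fun u => Real.exp (-(2/π^2) * u^2))
    · intro n
      exact ((Real.continuous_exp.comp (by continuity)).aestronglyMeasurable).indicator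
        measurableSet_Ioc
    · exact integrable_exp_neg_mul_sq (by positivity)
    · intro n
      filter_upwards with u
      rw [Real.norm_eq_abs]
      rcases le_or_gt (c n) 0 with hcn | hcn
      · have hemp : Set.Ioc (-(π * c n)) (π * c n) = ∅ := by
          apply Set.Ioc_eq_empty
          intro h
          nlinarith
        simp [hF, hemp]
        positivity
      · by_cases hu : u ∈ Set.Ioc (-(π * c n)) (π * c n)
        · rw [hF]
          simp only [Set.indicator_of_mem hu]
          rw [abs_of_nonneg (Real.exp_pos _).le, Real.exp_le_exp]
          have hθ : |u / c n| ≤ π := by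
            rw [abs_div, abs_of_pos hcn, div_le_iff₀ hcn]
            rcases hu with ⟨h1, h2⟩
            rw [abs_le]; constructor <;> nlinarith
          have := one_sub_cos_ge' (u / c n) hθ
          have h2 : 2/π^2 * (u / c n)^2 * (c n)^2 ≤ (1 - Real.cos (u / c n)) * (c n)^2 := by
            nlinarith [sq_nonneg (c n)]
          have h3 : 2/π^2 * (u / c n)^2 * (c n)^2 = 2/π^2 * u^2 := by
            field_simp
          nlinarith
        · rw [hF]
          simp only [Set.indicator_of_notMem hu]
          simp; positivity
    · filter_upwards with u
      have hev : ∀ᶠ n in atTop, u ∈ Set.Ioc (-(π * c n)) (π * c n) ∧ 0 < c n := by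
        have h1 : Tendsto (fun n => π * c n) atTop atTop := hc.const_mul_atTop hπ
        filter_upwards [h1.eventually_ge_atTop (|u| + 1), hc.eventually_gt_atTop 0]
          with n h1 h2
        refine ⟨⟨?_, ?_⟩, h2⟩
        · have := abs_nonneg u; have := neg_abs_le u; linarith
        · have := le_abs_self u; linarith
      have hexp : Tendsto (fun n => -(c n)^2 * (1 - Real.cos (u / c n))) atTop
          (𝓝 (-(1/2 : ℝ) * u^2)) := by
        by_cases hu : u = 0
        · subst hu
          have h0 : Tendsto (fun _ : ℕ => (0:ℝ)) atTop (𝓝 0) := tendsto_const_nhds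
          simpa using h0.congr fun n => by simp
        · have ht : Tendsto (fun n => u / (2 * c n)) atTop (𝓝[≠] 0) := by
            rw [tendsto_nhdsWithin_iff]
            constructor
            · have h2c : Tendsto (fun n => 2 * c n) atTop atTop := hc.const_mul_atTop two_pos
              have := h2c.inv_tendsto_atTop.const_mul u
              rw [mul_zero] at this
              exact this.congr fun n => (div_eq_mul_inv _ _).symm
            · filter_upwards [hc.eventually_gt_atTop 0] with n hn
              simp only [Set.mem_compl_iff, Set.mem_singleton_iff]
              intro h
              rcases div_eq_zero_iff.mp h with h | h
              · exact hu h
              · nlinarith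
          have hlim : Tendsto (fun n => -(u^2/2) * (Real.sin (u/(2*c n)) / (u/(2*c n)))^2)
              atTop (𝓝 (-(1/2:ℝ) * u^2)) := by
            have h2 := ((sin_div_lim'.comp ht).pow 2).const_mul (-(u^2/2))
            rw [show (-(u^2/2) * 1^2 : ℝ) = -(1/2:ℝ)*u^2 by ring] at h2
            exact h2
          refine hlim.congr' ?_
          filter_upwards [hc.eventually_gt_atTop 0] with n hn
          have hcn : c n ≠ 0 := ne_of_gt hn
          have hs : 1 - Real.cos (u / c n) = 2 * Real.sin (u / (2 * c n))^2 := by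
            have := Real.sin_sq_eq_half_sub (u / (2 * c n))
            rw [show 2 * (u / (2 * c n)) = u / c n by field_simp] at this
            rw [this]; ring
          rw [hs]
          have hne : u / (2 * c n) ≠ 0 := by
            intro h
            rcases div_eq_zero_iff.mp h with h | h
            · exact hu h
            · nlinarith
          field_simp
      have : Tendsto (fun n => Real.exp (-(c n)^2 * (1 - Real.cos (u / c n)))) atTop
          (𝓝 (f u)) := (Real.continuous_exp.tendsto _).comp hexp
      refine this.congr' ?_
      filter_upwards [hev] with n ⟨hmem, _⟩
      rw [hF]
      simp only [Set.indicator_of_mem hmem]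
  have hgauss : ∫ u, f u = Real.sqrt (2*π) := by
    rw [hf]
    simp only
    rw [integral_gaussian]
    congr 1
    rw [div_div_eq_mul_div, div_one]
    ring
  rw [hgauss] at hmain
  refine hmain.congr' ?_
  filter_upwards [hc.eventually_gt_atTop 0] with n hn
  have hcn : c n ≠ 0 := ne_of_gt hn
  rw [hF]
  simp only
  rw [integral_indicator measurableSet_Ioc]
  rw [← intervalIntegral.integral_of_le (by nlinarith : -(π * c n) ≤ π * c n)]
  rw [intervalIntegral.integral_comp_div (fun θ => Real.exp (-(c n)^2 * (1 - Real.cos θ))) hcn]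
  rw [neg_div, mul_div_assoc, div_self hcn, mul_one]
  simp [smul_eq_mul]

theorem fn_limit_nonzero_point (r : ℝ) (hr : 0 < r)
    (x : EuclideanSpace ℝ (Fin 2)) (hx : x ≠ 0) :
    Tendsto (fun n : ℕ =>
        2 * (n:ℝ) * r * Real.sqrt π * I0 (2 * (n:ℝ)^2 * r * ‖x‖) *
          Real.exp (-(n:ℝ)^2 * (‖x‖^2 + r^2)))
      atTop
      (𝓝 (Real.sqrt (r / ‖x‖) * (if ‖x‖ = r then 1 else 0))) ∧
    Tendsto (fun n : ℕ => Real.exp (-(n:ℝ)^2 * (‖x‖ - r)^2))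
      atTop (𝓝 (if ‖x‖ = r then 1 else 0)) := by
  have hπ := Real.pi_pos
  have ha : 0 < ‖x‖ := norm_pos_iff.mpr hx
  constructor
  · by_cases h : ‖x‖ = r
    · -- the hard case: ‖x‖ = r
      rw [h, if_pos rfl, div_self hr.ne', Real.sqrt_one, mul_one]
      have hc : Tendsto (fun n : ℕ => Real.sqrt 2 * n * r) atTop atTop := by
        have h1 : Tendsto (fun n : ℕ => (n:ℝ)) atTop atTop := tendsto_natCast_atTop_atTop
        have h2 := (h1.const_mul_atTop (by positivity : (0:ℝ) < Real.sqrt 2)).atTop_mul_const hr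
        exact h2.congr fun n => by ring
      have key := key_tendsto' hc
      have h2π : (0:ℝ) < Real.sqrt (2*π) := Real.sqrt_pos.mpr (by positivity)
      have hlim := key.const_mul (1 / Real.sqrt (2*π))
      rw [show (1 / Real.sqrt (2*π)) * Real.sqrt (2*π) = 1 from by field_simp] at hlim
      refine hlim.congr fun n => ?_
      -- pointwise equality
      have hsq : (Real.sqrt 2 * n * r)^2 = 2 * (n:ℝ)^2 * r^2 := by
        rw [mul_pow, mul_pow, Real.sq_sqrt (by norm_num : (0:ℝ) ≤ 2)]
      have hint : ∀ θ : ℝ, Real.exp (-(Real.sqrt 2 * n * r)^2 * (1 - Real.cos θ)) =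
          Real.exp (-(2 * (n:ℝ)^2 * r^2)) * Real.exp (2 * (n:ℝ)^2 * r * r * Real.cos θ) := by
        intro θ
        rw [← Real.exp_add, hsq]
        congr 1
        ring
      simp only [hint]
      rw [intervalIntegral.integral_const_mul]
      rw [I0]
      have hE : Real.exp (-(2 * (n:ℝ)^2 * r^2)) = Real.exp (-(n:ℝ)^2 * (r^2 + r^2)) := by
        congr 1; ring
      rw [hE]
      have hsπ : Real.sqrt π * Real.sqrt π = π := Real.mul_self_sqrt hπ.le
      have hs2 : Real.sqrt 2 * Real.sqrt 2 = 2 := Real.mul_self_sqrt (by norm_num)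
      have hsp : Real.sqrt (2*π) = Real.sqrt 2 * Real.sqrt π :=
        Real.sqrt_mul (by norm_num) π
      rw [hsp]
      set J := ∫ θ in (-π)..π, Real.exp (2 * (n:ℝ)^2 * r * r * Real.cos θ)
      set E := Real.exp (-(n:ℝ)^2 * (r^2 + r^2))
      have hsπ0 : Real.sqrt π ≠ 0 := by positivity
      have hs20 : Real.sqrt 2 ≠ 0 := by positivity
      field_simp
      linear_combination (-((n:ℝ) * E * J)) * hsπ
    · -- ‖x‖ ≠ r : squeeze to 0
      rw [if_neg h, mul_zero]
      set a := ‖x‖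
      set c := (a - r)^2 with hcdef
      have hc0 : 0 < c := by
        have : a - r ≠ 0 := sub_ne_zero.mpr h
        positivity
      have hI0nn : ∀ n : ℕ, 0 ≤ I0 (2 * (n:ℝ)^2 * r * a) := by
        intro n
        rw [I0]
        apply mul_nonneg (by positivity)
        apply intervalIntegral.integral_nonneg (by linarith)
        intro u _
        exact (Real.exp_pos _).le
      have hI0le : ∀ n : ℕ, I0 (2 * (n:ℝ)^2 * r * a) ≤ Real.exp (2 * (n:ℝ)^2 * r * a) := by
        intro n
        rw [I0]
        have ht0 : (0:ℝ) ≤ 2 * (n:ℝ)^2 * r * a := by positivity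
        have hmono : (∫ θ in (-π)..π, Real.exp (2 * (n:ℝ)^2 * r * a * Real.cos θ)) ≤
            ∫ _θ in (-π)..π, Real.exp (2 * (n:ℝ)^2 * r * a) := by
          apply intervalIntegral.integral_mono_on (by linarith)
          · exact (Real.continuous_exp.comp (by continuity)).intervalIntegrable _ _
          · exact intervalIntegrable_const
          · intro θ _
            apply Real.exp_le_exp.mpr
            nlinarith [Real.cos_le_one θ, Real.neg_one_le_cos θ]
        have hconst : (∫ _θ in (-π)..π, Real.exp (2 * (n:ℝ)^2 * r * a)) =
            (2*π) * Real.exp (2 * (n:ℝ)^2 * r * a) := by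
          rw [intervalIntegral.integral_const, smul_eq_mul]
          ring_nf
        calc (1 / (2*π)) * ∫ θ in (-π)..π, Real.exp (2 * (n:ℝ)^2 * r * a * Real.cos θ)
            ≤ (1 / (2*π)) * ((2*π) * Real.exp (2 * (n:ℝ)^2 * r * a)) := by
              apply mul_le_mul_of_nonneg_left _ (by positivity)
              rw [← hconst]; exact hmono
          _ = Real.exp (2 * (n:ℝ)^2 * r * a) := by field_simp
      set U : ℕ → ℝ := fun n => (2*r*Real.sqrt π / c) * ((c * n) * Real.exp (-(c * n)))
        with hU
      have hupper : ∀ n : ℕ, 2 * (n:ℝ) * r * Real.sqrt π * I0 (2 * (n:ℝ)^2 * r * a) *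
          Real.exp (-(n:ℝ)^2 * (a^2 + r^2)) ≤ U n := by
        intro n
        have hb1 : 2 * (n:ℝ) * r * Real.sqrt π * I0 (2 * (n:ℝ)^2 * r * a) *
            Real.exp (-(n:ℝ)^2 * (a^2 + r^2)) ≤
            2 * (n:ℝ) * r * Real.sqrt π * Real.exp (2 * (n:ℝ)^2 * r * a) *
            Real.exp (-(n:ℝ)^2 * (a^2 + r^2)) := by
          apply mul_le_mul_of_nonneg_right _ (Real.exp_pos _).le
          exact mul_le_mul_of_nonneg_left (hI0le n) (by positivity)
        have hb2 : 2 * (n:ℝ) * r * Real.sqrt π * Real.exp (2 * (n:ℝ)^2 * r * a) *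
            Real.exp (-(n:ℝ)^2 * (a^2 + r^2)) =
            2 * r * Real.sqrt π * ((n:ℝ) * Real.exp (-((n:ℝ)^2 * c))) := by
          rw [mul_assoc, ← Real.exp_add]
          rw [show 2 * (n:ℝ)^2 * r * a + -(n:ℝ)^2 * (a^2 + r^2) = -((n:ℝ)^2 * c) from by
            rw [hcdef]; ring]
          ring
        have hb3 : (n:ℝ) * Real.exp (-((n:ℝ)^2 * c)) ≤ (n:ℝ) * Real.exp (-((n:ℝ) * c)) := by
          apply mul_le_mul_of_nonneg_left _ (Nat.cast_nonneg n)
          apply Real.exp_le_exp.mpr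
          have hnn : (n:ℝ) ≤ (n:ℝ)^2 := by
            rcases Nat.eq_zero_or_pos n with h0 | h0
            · simp [h0]
            · have h1 : (1:ℝ) ≤ (n:ℝ) := by exact_mod_cast h0
              nlinarith
          nlinarith
        have hb4 : 2 * r * Real.sqrt π * ((n:ℝ) * Real.exp (-((n:ℝ) * c))) = U n := by
          rw [hU]
          simp only
          rw [show -(c * (n:ℝ)) = -((n:ℝ) * c) from by ring]
          field_simp
        calc 2 * (n:ℝ) * r * Real.sqrt π * I0 (2 * (n:ℝ)^2 * r * a) *
            Real.exp (-(n:ℝ)^2 * (a^2 + r^2)) ≤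
            2 * (n:ℝ) * r * Real.sqrt π * Real.exp (2 * (n:ℝ)^2 * r * a) *
            Real.exp (-(n:ℝ)^2 * (a^2 + r^2)) := hb1
          _ = 2 * r * Real.sqrt π * ((n:ℝ) * Real.exp (-((n:ℝ)^2 * c))) := hb2
          _ ≤ 2 * r * Real.sqrt π * ((n:ℝ) * Real.exp (-((n:ℝ) * c))) := by
              exact mul_le_mul_of_nonneg_left hb3 (by positivity)
          _ = U n := hb4
      have hlow : ∀ n : ℕ, (0:ℝ) ≤ 2 * (n:ℝ) * r * Real.sqrt π * I0 (2 * (n:ℝ)^2 * r * a) *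
          Real.exp (-(n:ℝ)^2 * (a^2 + r^2)) := by
        intro n
        apply mul_nonneg _ (Real.exp_pos _).le
        exact mul_nonneg (by positivity) (hI0nn n)
      have hUlim : Tendsto U atTop (𝓝 0) := by
        have h1 := tendsto_pow_mul_exp_neg_atTop_nhds_zero 1
        have h2 : Tendsto (fun n : ℕ => c * (n:ℝ)) atTop atTop :=
          tendsto_natCast_atTop_atTop.const_mul_atTop hc0
        have h3 := (h1.comp h2).const_mul (2*r*Real.sqrt π / c)
        rw [mul_zero] at h3
        refine h3.congr fun n => ?_
        simp [hU, pow_one]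
      have := tendsto_of_tendsto_of_tendsto_of_le_of_le tendsto_const_nhds hUlim hlow hupper
      exact this
  · by_cases h : ‖x‖ = r
    · rw [if_pos h, h]
      have : ∀ n : ℕ, Real.exp (-(n:ℝ)^2 * (r - r)^2) = 1 := by
        intro n; simp
      exact tendsto_const_nhds.congr fun n => (this n).symm
    · rw [if_neg h]
      have hc0 : 0 < (‖x‖ - r)^2 := by
        have : ‖x‖ - r ≠ 0 := sub_ne_zero.mpr h
        positivity
      have hn2 : Tendsto (fun n : ℕ => (n:ℝ)^2) atTop atTop :=
        (tendsto_pow_atTop (two_ne_zero)).comp tendsto_natCast_atTop_atTop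
      have hmul : Tendsto (fun n : ℕ => (n:ℝ)^2 * (‖x‖ - r)^2) atTop atTop :=
        hn2.atTop_mul_const hc0
      have hneg : Tendsto (fun n : ℕ => -((n:ℝ)^2 * (‖x‖ - r)^2)) atTop atBot :=
        tendsto_neg_atTop_atBot.comp hmul
      have := Real.tendsto_exp_atBot.comp hneg
      refine this.congr fun n => ?_
      simp [neg_mul]
end

section
/- Let r > 0 and let (g_n) be Schwartz functions on ℝ² with g_n ≥ 0, ∫_{B_{1/n}} g_n → 1, and g_n(x) ≤ φ(x) for all ‖x‖ ≥ 1/n for some fixed Schwartz φ. Then f_n := g_n * 1_{C_{r,1/n}} converges pointwise to the indicator of the circle C_r and is uniformly dominated by a single Schwartz function, where C_{r,1/n} = {x : r − 1/n < ‖x‖ < r + 1/n}. -/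
open Real MeasureTheory Filter Topology Metric ContinuousLinearMap SchwartzMap Convolution

noncomputable section
namespace AAC

abbrev E2 : Type := EuclideanSpace ℝ (Fin 2)

set_option linter.unusedSectionVars false
set_option linter.unusedVariables false
set_option maxHeartbeats 1000000

/-- smooth compactly supported functions are Schwartz -/
def ofCompactSupport (f : E2 → ℝ) (hf : ContDiff ℝ ((⊤:ℕ∞)) f) (hc : HasCompactSupport f) :
    SchwartzMap E2 ℝ where
  toFun := f
  smooth' := hf
  decay' := by
    intro k n
    have h1 : Continuous fun x : E2 => ‖x‖ ^ k * ‖iteratedFDeriv ℝ n f x‖ :=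
      ((continuous_norm.pow k).mul (hf.continuous_iteratedFDeriv (by exact_mod_cast le_top)).norm)
    have h2 : HasCompactSupport fun x : E2 => ‖x‖ ^ k * ‖iteratedFDeriv ℝ n f x‖ :=
      ((hc.iteratedFDeriv n).norm).mul_left
    obtain ⟨C, hC⟩ := h1.bounded_above_of_compact_support h2
    exact ⟨C, fun x => (Real.le_norm_self _).trans (hC x)⟩

@[simp] lemma ofCompactSupport_apply (f : E2 → ℝ) (hf) (hc) (x : E2) :
    ofCompactSupport f hf hc x = f x := rfl

lemma pow_add_le (k : ℕ) {a b : ℝ} (ha : 0 ≤ a) (hb : 0 ≤ b) :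
    (a + b) ^ k ≤ 2 ^ k * (a ^ k + b ^ k) := by
  have h1 : (a + b) ^ k ≤ (2 * max a b) ^ k := by
    apply pow_le_pow_left₀ (by positivity)
    rcases le_total a b with h | h
    · rw [max_eq_right h]; linarith
    · rw [max_eq_left h]; linarith
  refine h1.trans ?_
  rw [mul_pow]
  gcongr
  rcases le_total a b with h | h
  · rw [max_eq_right h]; nlinarith [pow_nonneg ha k]
  · rw [max_eq_left h]; nlinarith [pow_nonneg hb k]

/-- Decay of convolution of a Schwartz function with a compactly supported smooth function. -/
lemma conv_decay (Φ : SchwartzMap E2 ℝ) (k : ℕ) :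
    ∀ (n : ℕ) (M : Type) [inst1 : NormedAddCommGroup M] [inst2 : NormedSpace ℝ M] (ψ : E2 → M),
    ContDiff ℝ ((⊤:ℕ∞)) ψ → HasCompactSupport ψ →
    ∃ C : ℝ, ∀ x, ‖x‖ ^ k * ‖iteratedFDeriv ℝ n (Φ ⋆[lsmul ℝ ℝ, volume] ψ) x‖ ≤ C := by
  intro n
  induction n with
  | zero =>
    intro M iM iM2 ψ hψs hψc
    obtain ⟨R, hR0, hR⟩ : ∃ R : ℝ, 0 ≤ R ∧ tsupport ψ ⊆ closedBall 0 R := by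
      obtain ⟨R, hR⟩ := hψc.isBounded.subset_closedBall 0
      exact ⟨max R 0, le_max_right _ _, hR.trans (closedBall_subset_closedBall (le_max_left _ _))⟩
    obtain ⟨Cψ, hCψ⟩ : ∃ C, ∀ x, ‖ψ x‖ ≤ C := by
      obtain ⟨C, hC⟩ := hψs.continuous.norm.bounded_above_of_compact_support hψc.norm
      exact ⟨C, fun x => (Real.le_norm_self _).trans (hC x)⟩
    have hCψ0 : 0 ≤ Cψ := le_trans (norm_nonneg _) (hCψ 0)
    set S0 : ℝ := SchwartzMap.seminorm ℝ 0 0 Φ with hS0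
    set Sk : ℝ := SchwartzMap.seminorm ℝ k 0 Φ with hSk
    set D : ℝ := 2 ^ k * (Sk + R ^ k * S0) with hD
    have hDy : ∀ y : E2, (‖y‖ + R) ^ k * ‖Φ y‖ ≤ D := by
      intro y
      calc (‖y‖ + R) ^ k * ‖Φ y‖ ≤ 2 ^ k * (‖y‖ ^ k + R ^ k) * ‖Φ y‖ := by
            gcongr; exact pow_add_le k (norm_nonneg _) hR0
        _ = 2 ^ k * (‖y‖ ^ k * ‖Φ y‖ + R ^ k * ‖Φ y‖) := by ring
        _ ≤ 2 ^ k * (Sk + R ^ k * S0) := by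
            gcongr
            · exact Φ.norm_pow_mul_le_seminorm ℝ k y
            · exact Φ.norm_le_seminorm ℝ y
    have hD0 : 0 ≤ D := le_trans (by positivity) (hDy 0)
    refine ⟨D * Cψ * (volume (closedBall (0:E2) R)).toReal, fun x => ?_⟩
    rw [norm_iteratedFDeriv_zero]
    have h1 : ‖(Φ ⋆[lsmul ℝ ℝ, volume] ψ) x‖ ≤ ∫ y, ‖Φ y • ψ (x - y)‖ := by
      rw [convolution_def]
      simpa using norm_integral_le_integral_norm fun y => Φ y • ψ (x - y)
    have h2 : ‖x‖ ^ k * ‖(Φ ⋆[lsmul ℝ ℝ, volume] ψ) x‖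
        ≤ ∫ y, ‖x‖ ^ k * ‖Φ y • ψ (x - y)‖ := by
      rw [integral_const_mul]
      exact mul_le_mul_of_nonneg_left h1 (by positivity)
    refine h2.trans ?_
    have hintg : Integrable ((closedBall x R).indicator fun _ => D * Cψ) volume :=
      (integrable_indicator_iff measurableSet_closedBall).2
        (integrableOn_const measure_closedBall_lt_top.ne)
    have hle : ∀ y, ‖x‖ ^ k * ‖Φ y • ψ (x - y)‖
        ≤ (closedBall x R).indicator (fun _ => D * Cψ) y := by
      intro y
      by_cases hy : y ∈ closedBall x R
      · rw [Set.indicator_of_mem hy, norm_smul]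
        have hxy : ‖x‖ ≤ ‖y‖ + R := by
          have h3 : ‖x - y‖ ≤ R := by
            rw [mem_closedBall, dist_comm, dist_eq_norm'] at hy
            simpa [norm_sub_rev] using hy
          have h4 := norm_sub_norm_le x y
          linarith
        calc ‖x‖ ^ k * (‖Φ y‖ * ‖ψ (x - y)‖)
            ≤ (‖y‖ + R) ^ k * (‖Φ y‖ * ‖ψ (x - y)‖) := by
              have h5 : 0 ≤ ‖Φ y‖ * ‖ψ (x - y)‖ := by positivity
              have h6 : ‖x‖ ^ k ≤ (‖y‖ + R) ^ k :=
                pow_le_pow_left₀ (norm_nonneg _) hxy k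
              exact mul_le_mul_of_nonneg_right h6 h5
          _ = ((‖y‖ + R) ^ k * ‖Φ y‖) * ‖ψ (x - y)‖ := by ring
          _ ≤ D * Cψ := mul_le_mul (hDy y) (hCψ _) (norm_nonneg _) hD0
      · rw [Set.indicator_of_notMem hy]
        have hz : ψ (x - y) = 0 := by
          apply image_eq_zero_of_notMem_tsupport
          intro hmem
          apply hy
          have h5 := hR hmem
          rw [mem_closedBall_zero_iff] at h5
          rw [mem_closedBall, dist_comm, dist_eq_norm]
          simpa [norm_sub_rev] using h5
        simp [hz]
    calc (∫ y, ‖x‖ ^ k * ‖Φ y • ψ (x - y)‖)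
        ≤ ∫ y, (closedBall x R).indicator (fun _ => D * Cψ) y :=
          integral_mono_of_nonneg (Filter.Eventually.of_forall fun y => by positivity) hintg
            (Filter.Eventually.of_forall hle)
      _ = D * Cψ * (volume (closedBall x R)).toReal := by
          rw [integral_indicator measurableSet_closedBall, setIntegral_const, smul_eq_mul,
            measureReal_def, mul_comm]
      _ = D * Cψ * (volume (closedBall (0:E2) R)).toReal := by
          rw [Measure.addHaar_closedBall_center]
  | succ n ih =>
    intro M iM iM2 ψ hψs hψc
    have hfd : fderiv ℝ (Φ ⋆[lsmul ℝ ℝ, volume] ψ)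
        = Φ ⋆[(lsmul ℝ ℝ : ℝ →L[ℝ] M →L[ℝ] M).precompR E2, volume] fderiv ℝ ψ := by
      funext x
      exact (hψc.hasFDerivAt_convolution_right (lsmul ℝ ℝ)
        (Φ.integrable.locallyIntegrable) (hψs.of_le (by exact_mod_cast le_top)) x).fderiv
    have hL : ((lsmul ℝ ℝ : ℝ →L[ℝ] M →L[ℝ] M).precompR E2)
        = (lsmul ℝ ℝ : ℝ →L[ℝ] (E2 →L[ℝ] M) →L[ℝ] (E2 →L[ℝ] M)) := by
      ext c T
      simp [ContinuousLinearMap.precompR]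
    obtain ⟨C, hC⟩ := ih (E2 →L[ℝ] M) (fderiv ℝ ψ) (hψs.fderiv_right (by simp)) (hψc.fderiv ℝ)
    refine ⟨C, fun x => ?_⟩
    rw [← norm_iteratedFDeriv_fderiv, hfd, hL]
    exact hC x

/-- Convolution of a Schwartz map with a smooth compactly supported function, as a Schwartz map. -/
def convSchwartz (Φ : SchwartzMap E2 ℝ) (χ : E2 → ℝ) (hs : ContDiff ℝ ((⊤:ℕ∞)) χ)
    (hc : HasCompactSupport χ) : SchwartzMap E2 ℝ where
  toFun := Φ ⋆[lsmul ℝ ℝ, volume] χ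
  smooth' := hc.contDiff_convolution_right (lsmul ℝ ℝ) Φ.integrable.locallyIntegrable hs
  decay' := fun k n => conv_decay Φ k n ℝ χ hs hc

lemma convSchwartz_apply (Φ : SchwartzMap E2 ℝ) (χ : E2 → ℝ) (hs) (hc) (x : E2) :
    convSchwartz Φ χ hs hc x = ∫ t, Φ t * χ (x - t) := by
  show (Φ ⋆[lsmul ℝ ℝ, volume] χ) x = _
  rw [convolution_def]
  simp only [lsmul_apply, smul_eq_mul]

lemma subLeft_measurePreserving (x : E2) :
    MeasurePreserving (fun y : E2 => x - y) volume volume :=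
  Measure.measurePreserving_sub_left volume x

lemma subLeft_emb (x : E2) : MeasurableEmbedding (fun y : E2 => x - y) :=
  (MeasurableEquiv.subLeft x).measurableEmbedding

lemma integrable_comp_sub (f : SchwartzMap E2 ℝ) (x : E2) :
    Integrable (fun y => f (x - y)) volume :=
  ((subLeft_measurePreserving x).integrable_comp_emb (subLeft_emb x)).2 f.integrable

lemma setIntegral_ball_sub (f : SchwartzMap E2 ℝ) (x : E2) (s : ℝ) :
    ∫ y in ball x s, f (x - y) = ∫ y in ball (0 : E2) s, f y := by
  have h := (subLeft_measurePreserving x).setIntegral_preimage_emb (subLeft_emb x)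
    (fun y => f y) (ball 0 s)
  have hset : ball x s = (fun y : E2 => x - y) ⁻¹' ball 0 s := by
    ext y
    simp only [Set.mem_preimage, mem_ball, dist_eq_norm, sub_zero]
    rw [norm_sub_rev]
  rw [hset]
  exact h

lemma integral_comp_sub (f : E2 → ℝ) (x : E2) :
    ∫ y, f (x - y) = ∫ y, f y :=
  integral_sub_left_eq_self f volume x

lemma one_div_nat_le_one (n : ℕ) : 1 / (n : ℝ) ≤ 1 := by
  cases n with
  | zero => norm_num
  | succ m =>
    rw [div_le_one (by positivity)]
    exact_mod_cast Nat.one_le_iff_ne_zero.2 (Nat.succ_ne_zero m)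

/-- volume of the annuli tends to `0`. -/
lemma vol_tendsto (r : ℝ) (hr : 0 < r) :
    Tendsto (fun n : ℕ =>
      (volume {y : E2 | r - 1 / (n:ℝ) < ‖y‖ ∧ ‖y‖ < r + 1 / (n:ℝ)}).toReal) atTop (𝓝 0) := by
  set A : ℕ → Set E2 := fun n => {y : E2 | r - 1 / (n:ℝ) < ‖y‖ ∧ ‖y‖ < r + 1 / (n:ℝ)} with hA
  have hAopen : ∀ n, IsOpen (A n) := fun n =>
    (isOpen_lt continuous_const continuous_norm).inter (isOpen_lt continuous_norm continuous_const)
  have hAfin : ∀ n, volume (A n) ≠ ⊤ := by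
    intro n
    have hsub : A n ⊆ ball (0:E2) (r+2) := by
      intro y hy
      rw [mem_ball, dist_zero_right]
      have := one_div_nat_le_one n
      have h2 := hy.2
      linarith
    exact (lt_of_le_of_lt (measure_mono hsub) measure_ball_lt_top).ne
  have hBanti : Antitone (fun n : ℕ => A (n+1)) := by
    intro m n hmn y hy
    have h1 : 1 / ((n:ℝ)+1) ≤ 1 / ((m:ℝ)+1) := by
      apply one_div_le_one_div_of_le (by positivity)
      exact_mod_cast Nat.succ_le_succ hmn
    have h2 := hy.1
    have h3 := hy.2
    constructor
    · push_cast at h2 ⊢; linarith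
    · push_cast at h3 ⊢; linarith
  have hInter : (⋂ n : ℕ, A (n+1)) ⊆ sphere (0:E2) r := by
    intro y hy
    simp only [Set.mem_iInter] at hy
    have h1 : ∀ ε : ℝ, 0 < ε → ‖y‖ < r + ε ∧ r - ε < ‖y‖ := by
      intro ε hε
      obtain ⟨n, hn⟩ := exists_nat_one_div_lt hε
      have h2 := (hy n).1
      have h3 := (hy n).2
      push_cast at h2 h3
      constructor <;> linarith
    have h2 : ‖y‖ = r := by
      apply le_antisymm
      · exact le_of_forall_pos_lt_add fun ε hε => (h1 ε hε).1
      · by_contra h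
        push_neg at h
        have := (h1 ((r - ‖y‖)/2) (by linarith)).2
        linarith
    simpa [mem_sphere, dist_zero_right] using h2
  have htend := tendsto_measure_iInter_atTop (μ := volume) (s := fun n : ℕ => A (n+1))
    (fun n => ((hAopen (n+1)).measurableSet.nullMeasurableSet)) hBanti ⟨0, hAfin 1⟩
  have hzero : volume (⋂ n : ℕ, A (n+1)) = 0 :=
    measure_mono_null hInter (Measure.addHaar_sphere (μ := volume) 0 r)
  rw [hzero] at htend
  have htoReal : Tendsto (fun n : ℕ => (volume (A (n+1))).toReal) atTop (𝓝 0) := by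
    have := (ENNReal.tendsto_toReal (by simp : (0:ENNReal) ≠ ⊤)).comp htend
    simpa [Function.comp_def] using this
  exact (tendsto_add_atTop_iff_nat (f := fun n : ℕ => (volume (A n)).toReal) 1).mp htoReal

end AAC

open AAC

/-- Convolutions `gₙ * 1_{C_{r,1/n}}` form an approximate `r`-circle :
they converge pointwise to the indicator of the circle `C_r` and are uniformly
dominated by a single Schwartz function. -/
theorem annulus_approx_circle (r : ℝ) (hr : 0 < r)
    (g : ℕ → SchwartzMap (EuclideanSpace ℝ (Fin 2)) ℝ)
    (hpos : ∀ n x, 0 ≤ g n x)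
    (hint : Tendsto (fun n : ℕ =>
        ∫ x in Metric.ball (0 : EuclideanSpace ℝ (Fin 2)) (1 / (n:ℝ)), g n x)
      atTop (𝓝 1))
    (φ : SchwartzMap (EuclideanSpace ℝ (Fin 2)) ℝ)
    (hdom : ∀ (n : ℕ) (x : EuclideanSpace ℝ (Fin 2)), 1 / (n:ℝ) ≤ ‖x‖ → g n x ≤ φ x) :
    (∀ x : EuclideanSpace ℝ (Fin 2),
        Tendsto (fun n : ℕ =>
            ∫ y in {y : EuclideanSpace ℝ (Fin 2) |
                r - 1 / (n:ℝ) < ‖y‖ ∧ ‖y‖ < r + 1 / (n:ℝ)}, g n (x - y))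
          atTop (𝓝 (if ‖x‖ = r then (1:ℝ) else 0))) ∧
    (∃ F : SchwartzMap (EuclideanSpace ℝ (Fin 2)) ℝ,
        ∀ (n : ℕ) (x : EuclideanSpace ℝ (Fin 2)),
          |∫ y in {y : EuclideanSpace ℝ (Fin 2) |
              r - 1 / (n:ℝ) < ‖y‖ ∧ ‖y‖ < r + 1 / (n:ℝ)}, g n (x - y)| ≤ F x) := by
  classical
  have hAopen : ∀ n : ℕ, IsOpen {y : E2 | r - 1 / (n:ℝ) < ‖y‖ ∧ ‖y‖ < r + 1 / (n:ℝ)} := fun n =>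
    (isOpen_lt continuous_const continuous_norm).inter (isOpen_lt continuous_norm continuous_const)
  set A : ℕ → Set E2 := fun n => {y : E2 | r - 1 / (n:ℝ) < ‖y‖ ∧ ‖y‖ < r + 1 / (n:ℝ)} with hA
  have hAmeas : ∀ n, MeasurableSet (A n) := fun n => (hAopen n).measurableSet
  have hAsub2 : ∀ n, A n ⊆ ball (0:E2) (r+2) := by
    intro n y hy
    rw [mem_ball, dist_zero_right]
    have := one_div_nat_le_one n
    have h2 := hy.2
    linarith
  have hAfin : ∀ n, volume (A n) ≠ ⊤ := fun n =>
    (lt_of_le_of_lt (measure_mono (hAsub2 n)) measure_ball_lt_top).ne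
  have hv : Tendsto (fun n : ℕ => (volume (A n)).toReal) atTop (𝓝 0) := vol_tendsto r hr
  have hGint : ∀ (n : ℕ) (x : E2), Integrable (fun y => g n (x - y)) volume := fun n x =>
    integrable_comp_sub (g n) x
  have hφint : ∀ x : E2, Integrable (fun y => φ (x - y)) volume := fun x =>
    integrable_comp_sub φ x
  set C0 : ℝ := SchwartzMap.seminorm ℝ 0 0 φ with hC0def
  have hφle : ∀ z : E2, φ z ≤ C0 := fun z => (Real.le_norm_self _).trans (φ.norm_le_seminorm ℝ z)
  have hC0 : 0 ≤ C0 := apply_nonneg _ _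
  have hφ0 : ∀ z : E2, 0 ≤ φ z := by
    have h1 : ∀ z : E2, z ≠ 0 → 0 ≤ φ z := by
      intro z hz
      have hnz : 0 < ‖z‖ := norm_pos_iff.2 hz
      obtain ⟨n, hn⟩ := exists_nat_gt (1 / ‖z‖)
      have hn0 : (0:ℝ) < n := lt_trans (by positivity) hn
      have hle : 1 / (n:ℝ) ≤ ‖z‖ := by
        rw [div_le_iff₀ hn0]
        rw [div_lt_iff₀ hnz] at hn
        linarith [mul_comm ‖z‖ (n:ℝ)]
      exact le_trans (hpos n z) (hdom n z hle)
    intro z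
    by_cases hz : z = 0
    · subst hz
      set v : E2 := EuclideanSpace.single 0 1 with hvdef
      have hvn : ‖v‖ = 1 := by simp [hvdef]
      have hseq : Tendsto (fun k : ℕ => (1/((k:ℝ)+1)) • v) atTop (𝓝 0) := by
        have h2 := (tendsto_one_div_add_atTop_nhds_zero_nat (𝕜 := ℝ)).smul_const v
        simpa using h2
      have h3 : Tendsto (fun k : ℕ => φ ((1/((k:ℝ)+1)) • v)) atTop (𝓝 (φ 0)) :=
        (φ.continuous.tendsto 0).comp hseq
      apply ge_of_tendsto h3
      filter_upwards with k
      apply h1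
      apply smul_ne_zero
      · exact (by positivity : (0:ℝ) < 1/((k:ℝ)+1)).ne'
      · intro h
        rw [h, norm_zero] at hvn
        exact one_ne_zero hvn.symm
    · exact h1 z hz
  have hball : ∀ (n : ℕ) (x : E2),
      ∫ y in ball x (1/(n:ℝ)), g n (x - y) = ∫ z in ball (0:E2) (1/(n:ℝ)), g n z := fun n x =>
    setIntegral_ball_sub (g n) x _
  have hsplit : ∀ (n : ℕ) (x : E2), ∫ y in A n, g n (x - y) =
      (∫ y in A n ∩ ball x (1/(n:ℝ)), g n (x - y)) +
      ∫ y in A n \ ball x (1/(n:ℝ)), g n (x - y) := fun n x =>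
    (integral_inter_add_diff measurableSet_ball ((hGint n x).integrableOn)).symm
  have hI1 : ∀ (n : ℕ) (x : E2), ∫ y in A n ∩ ball x (1/(n:ℝ)), g n (x - y)
      ≤ ∫ z in ball (0:E2) (1/(n:ℝ)), g n z := by
    intro n x
    rw [← hball n x]
    exact setIntegral_mono_set ((hGint n x).integrableOn)
      (Filter.Eventually.of_forall fun y => hpos n _)
      (HasSubset.Subset.eventuallyLE Set.inter_subset_right)
  have hI2φ : ∀ (n : ℕ) (x : E2), ∫ y in A n \ ball x (1/(n:ℝ)), g n (x - y)
      ≤ ∫ y in A n \ ball x (1/(n:ℝ)), φ (x - y) := by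
    intro n x
    apply setIntegral_mono_on ((hGint n x).integrableOn) ((hφint x).integrableOn)
      ((hAmeas n).diff measurableSet_ball)
    intro y hy
    apply hdom
    have h1 : ¬ (dist y x < 1/(n:ℝ)) := by simpa [mem_ball] using hy.2
    push_neg at h1
    rw [dist_eq_norm, norm_sub_rev] at h1
    exact h1
  have hφbound : ∀ (n : ℕ) (x : E2) (s : Set E2), s ⊆ A n → MeasurableSet s →
      ∫ y in s, φ (x - y) ≤ C0 * (volume (A n)).toReal := by
    intro n x s hs hsm
    calc ∫ y in s, φ (x - y) ≤ ∫ _y in s, C0 :=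
          setIntegral_mono_on ((hφint x).integrableOn)
            (integrableOn_const (lt_of_le_of_lt
              (measure_mono (hs.trans (hAsub2 n))) measure_ball_lt_top).ne) hsm
            (fun y _ => hφle _)
      _ = (volume s).toReal * C0 := by rw [setIntegral_const]; simp [measureReal_def]
      _ ≤ (volume (A n)).toReal * C0 := by
          apply mul_le_mul_of_nonneg_right _ hC0
          exact ENNReal.toReal_mono (hAfin n) (measure_mono hs)
      _ = C0 * (volume (A n)).toReal := mul_comm _ _
  have hfnonneg : ∀ (n : ℕ) (x : E2), 0 ≤ ∫ y in A n, g n (x - y) := fun n x =>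
    setIntegral_nonneg (hAmeas n) (fun y _ => hpos n _)
  constructor
  · -- pointwise limit
    intro x
    by_cases hx : ‖x‖ = r
    · rw [if_pos hx]
      have hlow : ∀ n : ℕ, (∫ z in ball (0:E2) (1/(n:ℝ)), g n z) ≤ ∫ y in A n, g n (x - y) := by
        intro n
        rw [← hball n x]
        apply setIntegral_mono_set ((hGint n x).integrableOn)
          (Filter.Eventually.of_forall fun y => hpos n _)
        apply HasSubset.Subset.eventuallyLE
        intro y hy
        rw [mem_ball, dist_eq_norm] at hy
        have h1 := abs_norm_sub_norm_le y x
        rw [abs_le] at h1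
        constructor
        · rw [← hx]; linarith
        · rw [← hx]; linarith
      have hup : ∀ n : ℕ, ∫ y in A n, g n (x - y)
          ≤ (∫ z in ball (0:E2) (1/(n:ℝ)), g n z) + C0 * (volume (A n)).toReal := by
        intro n
        rw [hsplit n x]
        apply add_le_add (hI1 n x)
        exact (hI2φ n x).trans (hφbound n x _ Set.diff_subset ((hAmeas n).diff measurableSet_ball))
      have hupperlim : Tendsto (fun n : ℕ =>
          (∫ z in ball (0:E2) (1/(n:ℝ)), g n z) + C0 * (volume (A n)).toReal) atTop (𝓝 1) := by
        have := hint.add (hv.const_mul C0)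
        simpa using this
      exact tendsto_of_tendsto_of_tendsto_of_le_of_le hint hupperlim hlow hup
    · rw [if_neg hx]
      have hδ : 0 < |‖x‖ - r| := abs_pos.2 (sub_ne_zero.2 hx)
      obtain ⟨N, hN⟩ := exists_nat_gt (2 / |‖x‖ - r|)
      apply squeeze_zero' (Filter.Eventually.of_forall fun n => hfnonneg n x) _
        (by simpa using hv.const_mul C0)
      refine eventually_atTop.2 ⟨N, fun n hn => ?_⟩
      have hn2 : 2 / |‖x‖ - r| < (n:ℝ) := lt_of_lt_of_le hN (by exact_mod_cast hn)
      have hn0 : (0:ℝ) < n := lt_trans (by positivity) hn2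
      have h2n : 2 / (n:ℝ) < |‖x‖ - r| := by
        rw [div_lt_iff₀ hn0]
        rw [div_lt_iff₀ hδ] at hn2
        linarith [mul_comm |‖x‖ - r| (n:ℝ)]
      have key : ∀ y ∈ A n, 1/(n:ℝ) ≤ ‖x - y‖ := by
        intro y hy
        have h1 : |‖y‖ - r| < 1/(n:ℝ) := by
          rw [abs_lt]
          exact ⟨by linarith [hy.1], by linarith [hy.2]⟩
        have h2 : |‖x‖ - ‖y‖| ≤ ‖x - y‖ := abs_norm_sub_norm_le x y
        have h3 : |‖x‖ - r| ≤ |‖x‖ - ‖y‖| + |‖y‖ - r| := abs_sub_le ‖x‖ ‖y‖ r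
        have h4 : 2/(n:ℝ) = 1/(n:ℝ) + 1/(n:ℝ) := by ring
        linarith
      calc ∫ y in A n, g n (x - y) ≤ ∫ y in A n, φ (x - y) :=
            setIntegral_mono_on ((hGint n x).integrableOn) ((hφint x).integrableOn) (hAmeas n)
              (fun y hy => hdom n _ (key y hy))
        _ ≤ C0 * (volume (A n)).toReal :=
            hφbound n x _ (subset_refl _) (hAmeas n)
  · -- uniform domination
    obtain ⟨Ma, hMa⟩ := hint.bddAbove_range
    set M : ℝ := max Ma 0 with hM
    have hMnn : 0 ≤ M := le_max_right _ _
    have haM : ∀ n : ℕ, (∫ z in ball (0:E2) (1/(n:ℝ)), g n z) ≤ M := fun n =>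
      le_trans (hMa ⟨n, rfl⟩) (le_max_left _ _)
    set b : ContDiffBump (0:E2) := ⟨r+2, r+3, by linarith, by linarith⟩ with hb
    have hrIn : b.rIn = r + 2 := rfl
    have hχs : ContDiff ℝ ((⊤:ℕ∞)) (⇑b) := b.contDiff
    have hχc : HasCompactSupport (⇑b) := b.hasCompactSupport
    refine ⟨M • ofCompactSupport (⇑b) hχs hχc + convSchwartz φ (⇑b) hχs hχc, fun n x => ?_⟩
    rw [abs_of_nonneg (hfnonneg n x)]
    have hFx : (M • ofCompactSupport (⇑b) hχs hχc + convSchwartz φ (⇑b) hχs hχc) x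
        = M * b x + ∫ t, φ t * b (x - t) := by
      rw [SchwartzMap.add_apply, SchwartzMap.smul_apply, convSchwartz_apply,
        ofCompactSupport_apply, smul_eq_mul]
    rw [hsplit n x, hFx]
    apply add_le_add
    · -- I1 ≤ M * b x
      by_cases hx2 : ‖x‖ ≤ r + 2
      · have hbx : b x = 1 := b.one_of_mem_closedBall
          (by simpa [mem_closedBall, dist_zero_right] using hx2)
        rw [hbx, mul_one]
        exact (hI1 n x).trans (haM n)
      · have hempty : A n ∩ ball x (1/(n:ℝ)) = ∅ := by
          ext y
          simp only [Set.mem_inter_iff, Set.mem_empty_iff_false, iff_false, not_and]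
          intro hy1 hy2
          rw [mem_ball, dist_eq_norm] at hy2
          apply hx2
          have h1 : ‖y‖ < r + 1 := by
            have := one_div_nat_le_one n
            linarith [hy1.2]
          have h2 : ‖y - x‖ < 1 := lt_of_lt_of_le hy2 (one_div_nat_le_one n)
          calc ‖x‖ = ‖y - (y - x)‖ := by congr 1; abel
            _ ≤ ‖y‖ + ‖y - x‖ := norm_sub_le _ _
            _ ≤ r + 2 := by linarith
        rw [hempty]
        simp only [Measure.restrict_empty, integral_zero_measure]
        exact mul_nonneg hMnn b.nonneg
    · -- I2 ≤ conv
      have hA1meas : MeasurableSet (A 1) := hAmeas 1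
      have step1 := hI2φ n x
      have step2 : ∫ y in A n \ ball x (1/(n:ℝ)), φ (x - y) ≤ ∫ y in A 1, φ (x - y) := by
        apply setIntegral_mono_set ((hφint x).integrableOn)
          (Filter.Eventually.of_forall fun y => hφ0 _)
        apply HasSubset.Subset.eventuallyLE
        intro y hy
        have hy1 := (Set.diff_subset hy)
        have := one_div_nat_le_one n
        constructor
        · push_cast; have := hy1.1; linarith
        · push_cast; have := hy1.2; linarith
      have step3 : ∫ y in A 1, φ (x - y) ≤ ∫ y, φ (x - y) * b y := by
        rw [← integral_indicator hA1meas]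
        have hintRHS : Integrable (fun y => φ (x - y) * b y) volume := by
          have h1 : Integrable (fun y => b y * φ (x - y)) volume :=
            Integrable.bdd_mul (c := 1) (hφint x) (b.continuous.aestronglyMeasurable)
              (Filter.Eventually.of_forall fun y => by rw [Real.norm_eq_abs, abs_of_nonneg b.nonneg]; exact b.le_one)
          exact h1.congr (Filter.Eventually.of_forall fun y => mul_comm _ _)
        apply integral_mono_of_nonneg _ hintRHS
        · apply Filter.Eventually.of_forall
          intro y
          by_cases hy : y ∈ A 1
          · rw [Set.indicator_of_mem hy]
            have hby : b y = 1 := by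
              apply b.one_of_mem_closedBall
              rw [mem_closedBall, dist_zero_right, hrIn]
              have h9 := hy.2
              push_cast at h9
              linarith
            show φ (x - y) ≤ φ (x - y) * b y
            rw [hby, mul_one]
          · rw [Set.indicator_of_notMem hy]
            exact mul_nonneg (hφ0 _) b.nonneg
        · apply Filter.Eventually.of_forall
          intro y
          by_cases hy : y ∈ A 1
          · simpa [Set.indicator_of_mem hy] using hφ0 (x - y)
          · simp [Set.indicator_of_notMem hy]
      have step4 : ∫ y, φ (x - y) * b y = ∫ t, φ t * b (x - t) := by
        have h := integral_comp_sub (fun t => φ t * b (x - t)) x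
        simp only [sub_sub_cancel] at h
        exact h
      linarith
end
end
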